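/- For the same choice of sign ± throughout, the t-deformed K-theoretic monopole operators satisfy, for all i, j ∈ {1,…,N} and all α, β ∈ {0,…,ℓ−1}: {u_i^{α±}, u_j^{β±}} = ±(1 − δ_{ij}δ^{αβ}) κ^{αβ} u_i^{α±} u_j^{β±} · C^{αβ}_{ij}, where C^{αβ}_{ij} = (1/2)(Q_i^ℓ + Q_j^{ℓ−1})/(Q_i^ℓ − Q_j^{ℓ−1}) if (α,β) = (0, ℓ−1), C^{αβ}_{ij} = (1/2)(Q_i^{ℓ−1} + Q_j^ℓ)/(Q_i^{ℓ−1} − Q_j^ℓ) if (α,β) = (ℓ−1, 0), and C^{αβ}_{ij} = (1/2)(Q_i^α + Q_j^β)/(Q_i^α − Q_j^β) otherwise. -/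

import Mathlib

open Real Finset Matrix Kronecker

namespace SpinRSK

/-- Phase space: `x`-coordinates and `p`-coordinates indexed by (particle, node). -/
abbrev M (N : ℕ) : Type := ((Fin N × ℕ) → ℝ) × ((Fin N × ℕ) → ℝ)

/-- Extended coordinate `x_i^α`, satisfying `x_i^{α+ℓ} = x_i^α + log t`. -/
noncomputable def xc (N ℓ : ℕ) (t : ℝ) (i : Fin N) (α : ℤ) (x : M N) : ℝ :=
  x.1 (i, (α % (ℓ : ℤ)).toNat) + Real.log t * ((α / (ℓ : ℤ) : ℤ) : ℝ)

/-- `Q_i^α = exp(x_i^α)`, satisfying `Q_i^{α+ℓ} = t Q_i^α`. -/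
noncomputable def Q (N ℓ : ℕ) (t : ℝ) (i : Fin N) (α : ℤ) (x : M N) : ℝ :=
  Real.exp (xc N ℓ t i α x)

/-- Extended momentum coordinate `p_i^α`, satisfying `p_i^{α+ℓ} = p_i^α`. -/
def p (N ℓ : ℕ) (i : Fin N) (α : ℤ) (x : M N) : ℝ :=
  x.2 (i, (α % (ℓ : ℤ)).toNat)

/-- Partial derivative with respect to the coordinate `x_i^a`, `0 ≤ a < ℓ`. -/
noncomputable def pdx (N : ℕ) (i : Fin N) (a : ℕ) (f : M N → ℝ) (x : M N) : ℝ :=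
  deriv (fun s : ℝ => f (Function.update x.1 (i, a) s, x.2)) (x.1 (i, a))

/-- Partial derivative with respect to the coordinate `p_i^a`, `0 ≤ a < ℓ`. -/
noncomputable def pdp (N : ℕ) (i : Fin N) (a : ℕ) (f : M N → ℝ) (x : M N) : ℝ :=
  deriv (fun s : ℝ => f (x.1, Function.update x.2 (i, a) s)) (x.2 (i, a))

/-- The Poisson bracket `{f, g}`. -/
noncomputable def Pb (N ℓ : ℕ) (f g : M N → ℝ) (x : M N) : ℝ :=
  ∑ i : Fin N, ∑ a ∈ Finset.range ℓ,
    (pdx N i a f x * pdp N i a g x - pdp N i a f x * pdx N i a g x)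

/-- The open set `U` where the extended coordinates are pairwise distinct. -/
def U (N ℓ : ℕ) (t : ℝ) : Set (M N) :=
  {x | ∀ (i j : Fin N) (α β : ℤ), 0 ≤ α → α ≤ ℓ → 0 ≤ β → β ≤ ℓ →
    (i, α) ≠ (j, β) → xc N ℓ t i α x ≠ xc N ℓ t j β x}

/-- The K-theoretic gauge polynomial `χ^α(z)`. -/
noncomputable def chi (N ℓ : ℕ) (t : ℝ) (α : ℤ) (z : ℝ) (x : M N) : ℝ :=
  ∏ i : Fin N, (Real.sqrt (z / Q N ℓ t i α x) - Real.sqrt (Q N ℓ t i α x / z))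

/-- The t-deformed K-theoretic monopole operator `u_i^{α,s}` (`s = ±1`). -/
noncomputable def u (N ℓ : ℕ) (t : ℝ) (s : ℤ) (i : Fin N) (α : ℤ) (x : M N) : ℝ :=
  Real.exp ((s : ℝ) * p N ℓ i α x) * chi N ℓ t (α + s) (Q N ℓ t i α x) x /
    ∏ j ∈ Finset.univ.erase i,
      (Real.sqrt (Q N ℓ t i α x / Q N ℓ t j α x) -
        Real.sqrt (Q N ℓ t j α x / Q N ℓ t i α x))

/-- Kronecker delta modulo `ℓ`. -/
def dmod (ℓ : ℕ) (α β : ℤ) : ℝ := if α % (ℓ : ℤ) = β % (ℓ : ℤ) then 1 else 0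

/-- The Cartan matrix `κ^{αβ}` of the necklace quiver. -/
def kappa (ℓ : ℕ) (α β : ℤ) : ℝ :=
  2 * dmod ℓ α β - dmod ℓ (α + 1) β - dmod ℓ α (β + 1)

/-- One-site `L`-operator `L^α` as a matrix-valued function. -/
noncomputable def Lmat (N ℓ : ℕ) (t : ℝ) (α : ℤ) (x : M N) :
    Matrix (Fin N) (Fin N) ℝ :=
  Matrix.of fun i j =>
    u N ℓ t 1 j (α + 1) x / (1 - Q N ℓ t j (α + 1) x / Q N ℓ t i α x)

/-- The ordered product `L^α L^{α+1} ⋯ L^{α+n-1}`. -/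
noncomputable def prodL (N ℓ : ℕ) (t : ℝ) (α : ℤ) (n : ℕ) (x : M N) :
    Matrix (Fin N) (Fin N) ℝ :=
  ((List.range n).map (fun k => Lmat N ℓ t (α + (k : ℤ)) x)).prod

/-- The total `L`-operator `L = L^0 L^1 ⋯ L^{ℓ-1}`. -/
noncomputable def Ltot (N ℓ : ℕ) (t : ℝ) (x : M N) : Matrix (Fin N) (Fin N) ℝ :=
  prodL N ℓ t 0 ℓ x

/-- The Hamiltonians `H[n] = Tr(L^n)`. -/
noncomputable def Ham (N ℓ : ℕ) (t : ℝ) (n : ℕ) (x : M N) : ℝ :=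
  Matrix.trace (Ltot N ℓ t x ^ n)

/-- The matrix Poisson bracket `{A₁, B₂}` in `End(ℝ^N) ⊗ End(ℝ^N)`. -/
noncomputable def PbMat (N ℓ : ℕ) (A B : M N → Matrix (Fin N) (Fin N) ℝ) (x : M N) :
    Matrix (Fin N × Fin N) (Fin N × Fin N) ℝ :=
  Matrix.of fun ik jl => Pb N ℓ (fun y => A y ik.1 jl.1) (fun y => B y ik.2 jl.2) x

/-- Matrix unit `e_{ij}`. -/
noncomputable def Eu (N : ℕ) (i j : Fin N) : Matrix (Fin N) (Fin N) ℝ :=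
  Matrix.single i j 1

/-- The matrix `r^α`. -/
noncomputable def rmat (N ℓ : ℕ) (t : ℝ) (α : ℤ) (x : M N) :
    Matrix (Fin N × Fin N) (Fin N × Fin N) ℝ :=
  ∑ i : Fin N, ∑ j ∈ Finset.univ.erase i,
    ((1 / (Q N ℓ t i α x / Q N ℓ t j α x - 1)) • Eu N i i
      - (1 / (1 - Q N ℓ t j α x / Q N ℓ t i α x)) • Eu N i j) ⊗ₖ (Eu N j j - Eu N j i)

/-- The matrix `r̄^α` (shifted by `-1/2`). -/
noncomputable def rbar (N ℓ : ℕ) (t : ℝ) (α : ℤ) (x : M N) :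
    Matrix (Fin N × Fin N) (Fin N × Fin N) ℝ :=
  (∑ i : Fin N, ∑ j ∈ Finset.univ.erase i,
    (1 / (1 - Q N ℓ t j α x / Q N ℓ t i α x)) • ((Eu N i i - Eu N i j) ⊗ₖ Eu N j j))
  - (1 / 2 : ℝ) • ((1 : Matrix (Fin N) (Fin N) ℝ) ⊗ₖ (1 : Matrix (Fin N) (Fin N) ℝ))

/-- The matrix `r̲^α`. -/
noncomputable def runder (N ℓ : ℕ) (t : ℝ) (α : ℤ) (x : M N) :
    Matrix (Fin N × Fin N) (Fin N × Fin N) ℝ :=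
  ∑ i : Fin N, ∑ j ∈ Finset.univ.erase i,
    (1 / (1 - Q N ℓ t j α x / Q N ℓ t i α x)) •
      (Eu N i j ⊗ₖ Eu N j i - Eu N i i ⊗ₖ Eu N j j)

/-- Swap of the two tensor factors of `End(ℝ^N) ⊗ End(ℝ^N)`. -/
def swapT (N : ℕ) (R : Matrix (Fin N × Fin N) (Fin N × Fin N) ℝ) :
    Matrix (Fin N × Fin N) (Fin N × Fin N) ℝ :=
  Matrix.of fun ik jl => R (ik.2, ik.1) (jl.2, jl.1)

/-- The zero mode `E^α = Σ_i u_i^{α,+}`. -/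
noncomputable def Egen (N ℓ : ℕ) (t : ℝ) (α : ℤ) (x : M N) : ℝ :=
  ∑ i : Fin N, u N ℓ t 1 i α x

/-- The zero mode `F^α = Σ_i u_i^{α,-}`. -/
noncomputable def Fgen (N ℓ : ℕ) (t : ℝ) (α : ℤ) (x : M N) : ℝ :=
  ∑ i : Fin N, u N ℓ t (-1) i α x

/-- The Cartan zero mode `K^α = Π_i Q_i^α (Q_i^{α+1} Q_i^{α-1})^{-1/2}`. -/
noncomputable def Kcar (N ℓ : ℕ) (t : ℝ) (α : ℤ) (x : M N) : ℝ :=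
  ∏ i : Fin N, Q N ℓ t i α x / Real.sqrt (Q N ℓ t i (α + 1) x * Q N ℓ t i (α - 1) x)

/-- Generating series `e^α(z)`. -/
noncomputable def egens (N ℓ : ℕ) (t : ℝ) (α : ℤ) (z : ℝ) (x : M N) : ℝ :=
  ∑ i : Fin N, u N ℓ t 1 i α x / (1 - Q N ℓ t i α x / z)

/-- Generating series `f^α(z)`. -/
noncomputable def fgens (N ℓ : ℕ) (t : ℝ) (α : ℤ) (z : ℝ) (x : M N) : ℝ :=
  ∑ i : Fin N, u N ℓ t (-1) i α x / (1 - Q N ℓ t i α x / z)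

/-- The series `χ̃^α(z) = Π_i (1 - Q_i^α/z)`. -/
noncomputable def chit (N ℓ : ℕ) (t : ℝ) (α : ℤ) (z : ℝ) (x : M N) : ℝ :=
  ∏ i : Fin N, (1 - Q N ℓ t i α x / z)

/-- The series `h^α(z)`. -/
noncomputable def hgens (N ℓ : ℕ) (t : ℝ) (α : ℤ) (z : ℝ) (x : M N) : ℝ :=
  chit N ℓ t (α + 1) z x * chit N ℓ t (α - 1) z x / (chit N ℓ t α z x) ^ 2 *
    ∏ i : Fin N, Q N ℓ t i α x / Real.sqrt (Q N ℓ t i (α + 1) x * Q N ℓ t i (α - 1) x)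

/-- The modified one-site operator `L̃^α = (Q^α)⁻¹ L^α Q^{α+1}`. -/
noncomputable def Ltil (N ℓ : ℕ) (t : ℝ) (α : ℤ) (x : M N) :
    Matrix (Fin N) (Fin N) ℝ :=
  Matrix.of fun i j => Lmat N ℓ t α x i j * Q N ℓ t j (α + 1) x / Q N ℓ t i α x

/-- The ordered product `L̃^α L̃^{α+1} ⋯ L̃^{α+n-1}`. -/
noncomputable def prodLtil (N ℓ : ℕ) (t : ℝ) (α : ℤ) (n : ℕ) (x : M N) :
    Matrix (Fin N) (Fin N) ℝ :=
  ((List.range n).map (fun k => Ltil N ℓ t (α + (k : ℤ)) x)).prod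

/-- The spin variables `a_i^α = (L^0 ⋯ L^{α-2} e)_i`, `α ∈ {1,…,ℓ}`. -/
noncomputable def aspin (N ℓ : ℕ) (t : ℝ) (α : ℤ) (x : M N) (i : Fin N) : ℝ :=
  ∑ j : Fin N, prodL N ℓ t 0 (α - 1).toNat x i j

/-- The spin variables `c_j^α = (u^{α,+} L̃^α ⋯ L̃^{ℓ-1})_j`, `α ∈ {1,…,ℓ}`. -/
noncomputable def cspin (N ℓ : ℕ) (t : ℝ) (α : ℤ) (x : M N) (j : Fin N) : ℝ :=
  ∑ i : Fin N, u N ℓ t 1 i α x * prodLtil N ℓ t α ((ℓ : ℤ) - α).toNat x i j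

/-!
Since `√(Q/Q') - √(Q'/Q) = 2 sinh ((x - x')/2)` for `Q = eˣ`, `Q' = eˣ'`,
`u_i^{α±} = e^{±p_i^α} ∏_r 2 sinh ((x_i^α - x_r^{α±1})/2) / ∏_{r ≠ i} 2 sinh ((x_i^α - x_r^α)/2)`.
It depends on the momenta only through `e^{±p_i^α}`, so the bracket collapses to
`±(u_j^β ∂u_i^α/∂x_j^β - u_i^α ∂u_j^β/∂x_i^α)`, and every logarithmic derivative in it is
`±½ coth ((x - x')/2) = ±½ (Q + Q')/(Q - Q')`. These derivatives vanish unless the nodes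
`α`, `β` coincide or are neighbours; for `ℓ ≥ 3` these cases are exclusive and give
`κ = 2, -1, -1`. At the wrap-around neighbours the factor `t` in `Q^{α+ℓ} = t Q^α` cancels in
the ratio.
-/

noncomputable def halfCothRatio (a b : ℝ) : ℝ := 1 / 2 * (a + b) / (a - b)

lemma halfCothRatio_swap (a b : ℝ) : halfCothRatio b a = -halfCothRatio a b := by
  rw [halfCothRatio, halfCothRatio, ← neg_sub, div_neg, add_comm]

lemma halfCothRatio_mul_mul {c : ℝ} (hc : c ≠ 0) (a b : ℝ) :
    halfCothRatio (c * a) (c * b) = halfCothRatio a b := by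
  rw [halfCothRatio, halfCothRatio, ← mul_add, ← mul_sub, mul_left_comm,
    mul_div_mul_left _ _ hc]

lemma halfCothRatio_exp (a b : ℝ) :
    halfCothRatio (exp a) (exp b) = cosh ((a - b) / 2) / (2 * sinh ((a - b) / 2)) := by
  have ha : exp a = exp ((a - b) / 2) * exp ((a + b) / 2) := by rw [← exp_add]; ring_nf
  have hb : exp b = exp (-((a - b) / 2)) * exp ((a + b) / 2) := by rw [← exp_add]; ring_nf
  rw [halfCothRatio, ha, hb, ← add_mul, ← sub_mul, mul_div_assoc,
    mul_div_mul_right _ _ (exp_pos _).ne', cosh_eq, sinh_eq]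
  field_simp

lemma sqrt_exp_div_sub_sqrt_exp_div (a b : ℝ) :
    √(exp a / exp b) - √(exp b / exp a) = 2 * sinh ((a - b) / 2) := by
  have key : ∀ c d : ℝ, √(exp c / exp d) = exp ((c - d) / 2) := fun c d => by
    rw [← exp_sub, ← sqrt_sq (exp_pos ((c - d) / 2)).le, ← exp_nat_mul]; ring_nf
  rw [key, key, sinh_eq]; ring_nf

lemma sinh_half_sub_ne_zero {a b : ℝ} (h : a ≠ b) : sinh ((a - b) / 2) ≠ 0 := by
  rw [Ne, sinh_eq_zero]; intro h'; exact h (by linarith)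

lemma hasDerivAt_two_sinh_half_sub (c d v₀ : ℝ) :
    HasDerivAt (fun v => 2 * sinh ((c - (d + (v - v₀))) / 2)) (-cosh ((c - d) / 2)) v₀ := by
  have h := ((((hasDerivAt_id' v₀).sub_const v₀).const_add d).const_sub c).div_const 2
  have h2 := h.sinh.const_mul 2
  rw [sub_self, add_zero] at h2
  exact h2.congr_deriv (by ring)

lemma hasDerivAt_mul_two_sinh_half_sub (C : ℝ) {c d : ℝ} (h : c ≠ d) (v₀ : ℝ) :
    HasDerivAt (fun v => C * (2 * sinh ((c - (d + (v - v₀))) / 2)))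
      (-(C * (2 * sinh ((c - d) / 2)) * halfCothRatio (exp c) (exp d))) v₀ := by
  refine ((hasDerivAt_two_sinh_half_sub c d v₀).const_mul C).congr_deriv ?_
  have := sinh_half_sub_ne_zero h
  rw [halfCothRatio_exp]
  field_simp

lemma hasDerivAt_div_two_sinh_half_sub (C : ℝ) {c d : ℝ} (h : c ≠ d) (v₀ : ℝ) :
    HasDerivAt (fun v => C / (2 * sinh ((c - (d + (v - v₀))) / 2)))
      (C / (2 * sinh ((c - d) / 2)) * halfCothRatio (exp c) (exp d)) v₀ := by
  have hS := sinh_half_sub_ne_zero h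
  refine ((hasDerivAt_const v₀ C).div (hasDerivAt_two_sinh_half_sub c d v₀)
    (by simpa using hS)).congr_deriv ?_
  rw [halfCothRatio_exp, sub_self, add_zero]
  field_simp
  ring

section Nodes

variable {ℓ : ℕ} {s α β : ℤ}

lemma toNat_emod_eq_iff (hℓ : ℓ ≠ 0) {a b : ℤ} :
    (a % ℓ).toNat = (b % ℓ).toNat ↔ a ≡ b [ZMOD ℓ] := by
  have hℓ' : (ℓ : ℤ) ≠ 0 := by exact_mod_cast hℓ
  have ha := Int.emod_nonneg a hℓ'
  have hb := Int.emod_nonneg b hℓ'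
  rw [Int.ModEq]
  omega

lemma not_add_modEq_self {γ d : ℤ} (hd : d ≠ 0) (hdℓ : |d| < ℓ) : ¬ γ + d ≡ γ [ZMOD ℓ] :=
  fun h => hd (neg_eq_zero.1 (Int.eq_zero_of_abs_lt_dvd
    (by simpa using Int.modEq_iff_dvd.1 h) (by rwa [abs_neg])))

lemma not_add_sign_modEq_self (hℓ : 2 ≤ ℓ) (hs : s = 1 ∨ s = -1) (γ : ℤ) :
    ¬ γ + s ≡ γ [ZMOD ℓ] :=
  not_add_modEq_self (by omega) (abs_lt.2 ⟨by omega, by omega⟩)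

lemma not_add_sign_modEq_of_add_sign_modEq (hℓ : 3 ≤ ℓ) (hs : s = 1 ∨ s = -1)
    (h : α + s ≡ β [ZMOD ℓ]) : ¬ β + s ≡ α [ZMOD ℓ] := fun h' =>
  not_add_modEq_self (ℓ := ℓ) (d := s + s) (by omega) (abs_lt.2 ⟨by omega, by omega⟩)
    (by rw [← add_assoc]; exact (h.add_right s).trans h')

lemma not_modEq_of_add_sign_modEq (hℓ : 2 ≤ ℓ) (hs : s = 1 ∨ s = -1)
    (h : α + s ≡ β [ZMOD ℓ]) : ¬ α ≡ β [ZMOD ℓ] := fun h₀ =>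
  not_add_sign_modEq_self hℓ hs α (h.trans h₀.symm)

lemma add_sign_modEq_cases (hs : s = 1 ∨ s = -1) (hα : 0 ≤ α) (hα' : α < ℓ) (hβ : 0 ≤ β)
    (hβ' : β < ℓ) (h : α + s ≡ β [ZMOD ℓ]) :
    β = α + s ∨ β = α + s - ℓ ∨ β = α + s + ℓ := by
  obtain ⟨k, hk⟩ := Int.modEq_iff_dvd.1 h
  have hk₁ : -1 ≤ k := by rcases hs with rfl | rfl <;> nlinarith
  have hk₂ : k ≤ 1 := by rcases hs with rfl | rfl <;> nlinarith
  interval_cases k <;> omega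

lemma dmod_comm (ℓ : ℕ) (a b : ℤ) : dmod ℓ a b = dmod ℓ b a := by
  simp only [dmod, eq_comm]

lemma dmod_eq_one {a b : ℤ} (h : a ≡ b [ZMOD ℓ]) : dmod ℓ a b = 1 := if_pos h

lemma dmod_eq_zero {a b : ℤ} (h : ¬ a ≡ b [ZMOD ℓ]) : dmod ℓ a b = 0 := if_neg h

lemma dmod_add_neg_one (ℓ : ℕ) (a b : ℤ) : dmod ℓ (a + -1) b = dmod ℓ a (b + 1) := by
  have h : a + -1 ≡ b [ZMOD ℓ] ↔ a ≡ b + 1 [ZMOD ℓ] :=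
    ⟨fun h => by simpa using h.add_right 1, fun h => by simpa using h.add_right (-1)⟩
  exact if_congr h rfl rfl

lemma kappa_eq_of_sign (ℓ : ℕ) (hs : s = 1 ∨ s = -1) (α β : ℤ) :
    kappa ℓ α β = 2 * dmod ℓ α β - dmod ℓ (α + s) β - dmod ℓ (β + s) α := by
  rcases hs with rfl | rfl
  · rw [kappa, dmod_comm ℓ (β + 1)]
  · rw [kappa, dmod_add_neg_one, dmod_add_neg_one, dmod_comm ℓ β]; ring

lemma kappa_comm (ℓ : ℕ) (α β : ℤ) : kappa ℓ α β = kappa ℓ β α := by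
  rw [kappa_eq_of_sign ℓ (Or.inl rfl), kappa_eq_of_sign ℓ (Or.inl rfl) β, dmod_comm ℓ α]
  ring

lemma kappa_self (hℓ : 2 ≤ ℓ) (γ : ℤ) : kappa ℓ γ γ = 2 := by
  have h := not_add_sign_modEq_self hℓ (Or.inl rfl) γ
  rw [kappa_eq_of_sign ℓ (Or.inl rfl), dmod_eq_one rfl, dmod_eq_zero h]; ring

lemma kappa_of_add_sign_modEq (hℓ : 3 ≤ ℓ) (hs : s = 1 ∨ s = -1) (h : α + s ≡ β [ZMOD ℓ]) :
    kappa ℓ α β = -1 := by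
  have h₀ := not_modEq_of_add_sign_modEq (by omega) hs h
  have h₁ := not_add_sign_modEq_of_add_sign_modEq hℓ hs h
  rw [kappa_eq_of_sign ℓ hs, dmod_eq_zero h₀, dmod_eq_one h, dmod_eq_zero h₁]; ring

lemma kappa_of_not_adjacent (hs : s = 1 ∨ s = -1) (h₀ : ¬ α ≡ β [ZMOD ℓ])
    (h₁ : ¬ α + s ≡ β [ZMOD ℓ]) (h₂ : ¬ β + s ≡ α [ZMOD ℓ]) : kappa ℓ α β = 0 := by
  rw [kappa_eq_of_sign ℓ hs, dmod_eq_zero h₀, dmod_eq_zero h₁, dmod_eq_zero h₂]; ring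

end Nodes

section Coordinates

variable {N ℓ : ℕ} {t : ℝ}

lemma xc_add_length (hℓ : ℓ ≠ 0) (i : Fin N) (γ : ℤ) (x : M N) :
    xc N ℓ t i (γ + ℓ) x = xc N ℓ t i γ x + log t := by
  have hℓ' : (ℓ : ℤ) ≠ 0 := by exact_mod_cast hℓ
  rw [xc, xc, Int.add_emod_right, Int.add_ediv_of_dvd_right (dvd_refl _), Int.ediv_self hℓ']
  push_cast
  ring

-- `exp (log t) = t` only for `t > 0`; everything below needs just `exp (log t) ≠ 0`.
lemma Q_add_length (hℓ : ℓ ≠ 0) (i : Fin N) (γ : ℤ) (x : M N) :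
    Q N ℓ t i (γ + ℓ) x = exp (log t) * Q N ℓ t i γ x := by
  rw [Q, Q, xc_add_length hℓ, exp_add, mul_comm]

lemma xc_update_of_ne {x : M N} {r : Fin N} {δ : ℤ} {c : Fin N × ℕ}
    (h : (r, (δ % ℓ).toNat) ≠ c) (v : ℝ) :
    xc N ℓ t r δ (Function.update x.1 c v, x.2) = xc N ℓ t r δ x := by
  simp only [xc, Function.update_of_ne h]

lemma xc_update_self (x : M N) (r : Fin N) (δ : ℤ) (v : ℝ) :
    xc N ℓ t r δ (Function.update x.1 (r, (δ % ℓ).toNat) v, x.2) =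
      xc N ℓ t r δ x + (v - x.1 (r, (δ % ℓ).toNat)) := by
  simp only [xc, Function.update_self]
  ring

lemma xc_ne_xc_add_sign {x : M N} (hx : x ∈ U N ℓ t) {s α : ℤ} (hs : s = 1 ∨ s = -1)
    (hα : 0 ≤ α) (hα' : α < ℓ) (i j : Fin N) :
    xc N ℓ t i α x ≠ xc N ℓ t j (α + s) x := by
  by_cases h : 0 ≤ α + s
  · exact hx i j α (α + s) hα hα'.le h (by omega)
      (by simp only [ne_eq, Prod.mk.injEq, not_and]; omega)
  · have hℓ : ℓ ≠ 0 := by omega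
    have hne := hx i j (α + ℓ) (α + s + ℓ) (by omega) (by omega) (by omega) (by omega)
      (by simp only [ne_eq, Prod.mk.injEq, not_and]; omega)
    rw [xc_add_length hℓ, xc_add_length hℓ] at hne
    exact fun h => hne (by rw [h])

end Coordinates

lemma pdp_exp_mul {N : ℕ} {g : M N → ℝ} {x : M N} (hg : ∀ w, g (x.1, w) = g x) (σ : ℝ)
    (c : Fin N × ℕ) (k : Fin N) (a : ℕ) :
    pdp N k a (fun y => exp (σ * y.2 c) * g y) x =
      if (k, a) = c then σ * (exp (σ * x.2 c) * g x) else 0 := by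
  simp only [pdp, hg]
  split_ifs with h
  · subst h
    simp only [Function.update_self]
    rw [(((hasDerivAt_id' _).const_mul σ).exp.mul_const (g x)).deriv]
    ring
  · simp only [Function.update_of_ne (Ne.symm h), deriv_const]

section Monopole

variable {N ℓ : ℕ} {t : ℝ} {s : ℤ}

lemma u_eq_sinh (m : Fin N) (γ : ℤ) (y : M N) :
    u N ℓ t s m γ y = exp (s * p N ℓ m γ y) *
      (∏ r, 2 * sinh ((xc N ℓ t m γ y - xc N ℓ t r (γ + s) y) / 2)) /
      ∏ r ∈ univ.erase m, 2 * sinh ((xc N ℓ t m γ y - xc N ℓ t r γ y) / 2) := by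
  simp only [u, chi, Q, sqrt_exp_div_sub_sqrt_exp_div]

lemma pdp_u (m : Fin N) (γ : ℤ) (x : M N) (k : Fin N) (a : ℕ) :
    pdp N k a (u N ℓ t s m γ) x =
      if (k, a) = (m, (γ % ℓ).toNat) then s * u N ℓ t s m γ x else 0 := by
  have hu : u N ℓ t s m γ = fun y => exp (s * y.2 (m, (γ % ℓ).toNat)) *
      (chi N ℓ t (γ + s) (Q N ℓ t m γ y) y / ∏ r ∈ univ.erase m,
        (√(Q N ℓ t m γ y / Q N ℓ t r γ y) - √(Q N ℓ t r γ y / Q N ℓ t m γ y))) :=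
    funext fun y => mul_div_assoc _ _ _
  rw [hu]
  exact pdp_exp_mul (fun _ => rfl) _ _ k a

lemma pdx_u_of_not_modEq (hℓ : ℓ ≠ 0) {γ δ : ℤ} (h₀ : ¬ δ ≡ γ [ZMOD ℓ])
    (h₁ : ¬ δ ≡ γ + s [ZMOD ℓ]) (k m : Fin N) (x : M N) :
    pdx N k (δ % ℓ).toNat (u N ℓ t s m γ) x = 0 := by
  have hline : ∀ v, u N ℓ t s m γ (Function.update x.1 (k, (δ % ℓ).toNat) v, x.2) =
      u N ℓ t s m γ x := fun v => by
    have e₀ : ∀ r, xc N ℓ t r γ (Function.update x.1 (k, (δ % ℓ).toNat) v, x.2) =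
        xc N ℓ t r γ x := fun r =>
      xc_update_of_ne (fun h => h₀ ((toNat_emod_eq_iff hℓ).1 (congrArg Prod.snd h)).symm) v
    have e₁ : ∀ r, xc N ℓ t r (γ + s) (Function.update x.1 (k, (δ % ℓ).toNat) v, x.2) =
        xc N ℓ t r (γ + s) x := fun r =>
      xc_update_of_ne (fun h => h₁ ((toNat_emod_eq_iff hℓ).1 (congrArg Prod.snd h)).symm) v
    simp only [u_eq_sinh, e₀, e₁]
    rfl
  simp only [pdx, hline, deriv_const]

lemma pdx_u_same_node (hℓ : ℓ ≠ 0) {γ : ℤ} (hγ : ¬ γ + s ≡ γ [ZMOD ℓ]) {k m : Fin N}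
    (hkm : k ≠ m) {x : M N} (hne : xc N ℓ t m γ x ≠ xc N ℓ t k γ x) :
    pdx N k (γ % ℓ).toNat (u N ℓ t s m γ) x =
      u N ℓ t s m γ x * halfCothRatio (Q N ℓ t m γ x) (Q N ℓ t k γ x) := by
  set a := (γ % ℓ).toNat
  set c := xc N ℓ t m γ x
  set C := exp (s * p N ℓ m γ x) * (∏ r, 2 * sinh ((c - xc N ℓ t r (γ + s) x) / 2)) /
    ∏ r ∈ (univ.erase m).erase k, 2 * sinh ((c - xc N ℓ t r γ x) / 2) with hC
  have hline : ∀ v, u N ℓ t s m γ (Function.update x.1 (k, a) v, x.2) =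
      C / (2 * sinh ((c - (xc N ℓ t k γ x + (v - x.1 (k, a)))) / 2)) := fun v => by
    have e_m : xc N ℓ t m γ (Function.update x.1 (k, a) v, x.2) = c :=
      xc_update_of_ne (fun h => hkm (congrArg Prod.fst h).symm) v
    have e_s : ∀ r, xc N ℓ t r (γ + s) (Function.update x.1 (k, a) v, x.2) =
        xc N ℓ t r (γ + s) x := fun r =>
      xc_update_of_ne (fun h => hγ ((toNat_emod_eq_iff hℓ).1 (congrArg Prod.snd h))) v
    have e_r : ∀ r ∈ (univ.erase m).erase k,
        xc N ℓ t r γ (Function.update x.1 (k, a) v, x.2) = xc N ℓ t r γ x := fun r hr =>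
      xc_update_of_ne (fun h => (mem_erase.1 hr).1 (congrArg Prod.fst h)) v
    have e_p : p N ℓ m γ (Function.update x.1 (k, a) v, x.2) = p N ℓ m γ x := rfl
    rw [u_eq_sinh, ← mul_prod_erase (univ.erase m) _ (mem_erase.2 ⟨hkm, mem_univ k⟩),
      prod_congr (rfl : (univ.erase m).erase k = _) fun r hr => by rw [e_r r hr], e_m,
      xc_update_self, e_p, hC]
    simp only [e_s]
    ring
  have hu := hline (x.1 (k, a))
  rw [Function.update_eq_self, sub_self, add_zero] at hu
  rw [pdx, funext hline, (hasDerivAt_div_two_sinh_half_sub C hne _).deriv, hu]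
  rfl

lemma pdx_u_add_sign (hℓ : ℓ ≠ 0) {γ : ℤ} (hγ : ¬ γ + s ≡ γ [ZMOD ℓ]) {k m : Fin N}
    {x : M N} (hne : xc N ℓ t m γ x ≠ xc N ℓ t k (γ + s) x) :
    pdx N k ((γ + s) % ℓ).toNat (u N ℓ t s m γ) x =
      -(u N ℓ t s m γ x * halfCothRatio (Q N ℓ t m γ x) (Q N ℓ t k (γ + s) x)) := by
  set a := ((γ + s) % ℓ).toNat
  set c := xc N ℓ t m γ x
  set C := exp (s * p N ℓ m γ x) *
    (∏ r ∈ univ.erase k, 2 * sinh ((c - xc N ℓ t r (γ + s) x) / 2)) /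
    ∏ r ∈ univ.erase m, 2 * sinh ((c - xc N ℓ t r γ x) / 2) with hC
  have hline : ∀ v, u N ℓ t s m γ (Function.update x.1 (k, a) v, x.2) =
      C * (2 * sinh ((c - (xc N ℓ t k (γ + s) x + (v - x.1 (k, a)))) / 2)) := fun v => by
    have e_γ : ∀ r, xc N ℓ t r γ (Function.update x.1 (k, a) v, x.2) = xc N ℓ t r γ x :=
      fun r => xc_update_of_ne
        (fun h => hγ ((toNat_emod_eq_iff hℓ).1 (congrArg Prod.snd h)).symm) v
    have e_r : ∀ r ∈ univ.erase k,
        xc N ℓ t r (γ + s) (Function.update x.1 (k, a) v, x.2) = xc N ℓ t r (γ + s) x :=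
      fun r hr => xc_update_of_ne (fun h => (mem_erase.1 hr).1 (congrArg Prod.fst h)) v
    have e_p : p N ℓ m γ (Function.update x.1 (k, a) v, x.2) = p N ℓ m γ x := rfl
    rw [u_eq_sinh, ← mul_prod_erase univ _ (mem_univ k),
      prod_congr (rfl : univ.erase k = _) fun r hr => by rw [e_r r hr], xc_update_self, e_p, hC]
    simp only [e_γ]
    ring
  have hu := hline (x.1 (k, a))
  rw [Function.update_eq_self, sub_self, add_zero] at hu
  rw [pdx, funext hline, (hasDerivAt_mul_two_sinh_half_sub C hne _).deriv, hu]
  rfl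

end Monopole

section PoissonBracket

variable {N ℓ : ℕ}

lemma Pb_antisymm (f g : M N → ℝ) (x : M N) : Pb N ℓ g f x = -Pb N ℓ f g x := by
  rw [Pb, Pb, ← sum_neg_distrib]
  refine sum_congr rfl fun k _ => ?_
  rw [← sum_neg_distrib]
  exact sum_congr rfl fun a _ => by ring

lemma Pb_self (f : M N → ℝ) (x : M N) : Pb N ℓ f f x = 0 := by
  linarith [Pb_antisymm (ℓ := ℓ) f f x]

lemma Pb_eq_of_pdp_eq_ite {f g : M N → ℝ} {x : M N} {i j : Fin N} {a b : ℕ} (ha : a < ℓ)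
    (hb : b < ℓ) {cf cg : ℝ} (hf : ∀ k c, pdp N k c f x = if (k, c) = (i, a) then cf else 0)
    (hg : ∀ k c, pdp N k c g x = if (k, c) = (j, b) then cg else 0) :
    Pb N ℓ f g x = pdx N j b f x * cg - cf * pdx N i a g x := by
  simp [Pb, hf, hg, ha, hb, sum_sub_distrib, ite_and]

variable {t : ℝ} {s : ℤ}

lemma Pb_u_u (hℓ : ℓ ≠ 0) (i j : Fin N) (α β : ℤ) (x : M N) :
    Pb N ℓ (u N ℓ t s i α) (u N ℓ t s j β) x =
      s * (u N ℓ t s j β x * pdx N j (β % ℓ).toNat (u N ℓ t s i α) x -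
        u N ℓ t s i α x * pdx N i (α % ℓ).toNat (u N ℓ t s j β) x) := by
  have hℓ' : (ℓ : ℤ) ≠ 0 := by exact_mod_cast hℓ
  have hlt : ∀ γ : ℤ, (γ % ℓ).toNat < ℓ := fun γ => by
    have := Int.emod_nonneg γ hℓ'
    have := Int.emod_lt_of_pos γ (by omega : (0 : ℤ) < ℓ)
    omega
  rw [Pb_eq_of_pdp_eq_ite (hlt α) (hlt β) (pdp_u i α x) (pdp_u j β x)]
  ring

lemma Pb_u_u_same_node (hℓ : 2 ≤ ℓ) (hs : s = 1 ∨ s = -1) {i j : Fin N} (hij : i ≠ j)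
    {α : ℤ} {x : M N} (hne : xc N ℓ t i α x ≠ xc N ℓ t j α x) :
    Pb N ℓ (u N ℓ t s i α) (u N ℓ t s j α) x =
      2 * s * u N ℓ t s i α x * u N ℓ t s j α x *
        halfCothRatio (Q N ℓ t i α x) (Q N ℓ t j α x) := by
  have hα := not_add_sign_modEq_self hℓ hs α
  rw [Pb_u_u (by omega), pdx_u_same_node (by omega) hα hij.symm hne,
    pdx_u_same_node (by omega) hα hij hne.symm, halfCothRatio_swap]
  ring

lemma Pb_u_u_of_add_sign_modEq (hℓ : 3 ≤ ℓ) (hs : s = 1 ∨ s = -1) {α β : ℤ}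
    (h : α + s ≡ β [ZMOD ℓ]) {i j : Fin N} {x : M N}
    (hne : xc N ℓ t i α x ≠ xc N ℓ t j (α + s) x) :
    Pb N ℓ (u N ℓ t s i α) (u N ℓ t s j β) x =
      -(s * u N ℓ t s i α x * u N ℓ t s j β x *
        halfCothRatio (Q N ℓ t i α x) (Q N ℓ t j (α + s) x)) := by
  have h₀ := not_modEq_of_add_sign_modEq (by omega) hs h
  have h₁ := not_add_sign_modEq_of_add_sign_modEq hℓ hs h
  rw [Pb_u_u (by omega), ← h.eq,
    pdx_u_add_sign (by omega) (not_add_sign_modEq_self (by omega) hs α) hne,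
    pdx_u_of_not_modEq (by omega) h₀ (fun h' => h₁ h'.symm)]
  ring

lemma Pb_u_u_of_not_adjacent (hℓ : ℓ ≠ 0) {α β : ℤ} (h₀ : ¬ α ≡ β [ZMOD ℓ])
    (h₁ : ¬ α + s ≡ β [ZMOD ℓ]) (h₂ : ¬ β + s ≡ α [ZMOD ℓ]) (i j : Fin N) (x : M N) :
    Pb N ℓ (u N ℓ t s i α) (u N ℓ t s j β) x = 0 := by
  rw [Pb_u_u hℓ, pdx_u_of_not_modEq hℓ (fun h => h₀ h.symm) (fun h => h₁ h.symm),
    pdx_u_of_not_modEq hℓ h₀ (fun h => h₂ h.symm)]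
  ring

end PoissonBracket

/-- The coefficient `C^{αβ}_{ij}` of the bracket. -/
noncomputable def bracketCoeff (N ℓ : ℕ) (t : ℝ) (i j : Fin N) (α β : ℤ) (x : M N) : ℝ :=
  if (α, β) = ((0 : ℤ), (ℓ : ℤ) - 1) then
    halfCothRatio (Q N ℓ t i ℓ x) (Q N ℓ t j ((ℓ : ℤ) - 1) x)
  else if (α, β) = ((ℓ : ℤ) - 1, (0 : ℤ)) then
    halfCothRatio (Q N ℓ t i ((ℓ : ℤ) - 1) x) (Q N ℓ t j ℓ x)
  else halfCothRatio (Q N ℓ t i α x) (Q N ℓ t j β x)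

section BracketCoeff

variable {N ℓ : ℕ} {t : ℝ}

lemma bracketCoeff_swap (hℓ : ℓ ≠ 1) (i j : Fin N) (α β : ℤ) (x : M N) :
    bracketCoeff N ℓ t j i β α x = -bracketCoeff N ℓ t i j α β x := by
  unfold bracketCoeff
  split_ifs <;> simp only [Prod.mk.injEq] at * <;> first | omega | exact halfCothRatio_swap _ _

lemma bracketCoeff_self (hℓ : ℓ ≠ 1) (i j : Fin N) (α : ℤ) (x : M N) :
    bracketCoeff N ℓ t i j α α x = halfCothRatio (Q N ℓ t i α x) (Q N ℓ t j α x) := by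
  rw [bracketCoeff, if_neg (by simp only [Prod.mk.injEq]; omega),
    if_neg (by simp only [Prod.mk.injEq]; omega)]

lemma bracketCoeff_of_add_sign_modEq (hℓ : 3 ≤ ℓ) {s α β : ℤ} (hs : s = 1 ∨ s = -1)
    (hα : 0 ≤ α) (hα' : α < ℓ) (hβ : 0 ≤ β) (hβ' : β < ℓ) (h : α + s ≡ β [ZMOD ℓ])
    (i j : Fin N) (x : M N) :
    bracketCoeff N ℓ t i j α β x = halfCothRatio (Q N ℓ t i α x) (Q N ℓ t j (α + s) x) := by
  rcases add_sign_modEq_cases hs hα hα' hβ hβ' h with rfl | hβ₀ | hβ₀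
  · rw [bracketCoeff, if_neg (by simp only [Prod.mk.injEq]; omega),
      if_neg (by simp only [Prod.mk.injEq]; omega)]
  · obtain ⟨rfl, rfl, rfl⟩ : α = ℓ - 1 ∧ s = 1 ∧ β = 0 := by omega
    rw [bracketCoeff, if_neg (by simp only [Prod.mk.injEq]; omega), if_pos rfl, sub_add_cancel]
  · obtain ⟨rfl, rfl, rfl⟩ : α = 0 ∧ s = -1 ∧ β = ℓ - 1 := by omega
    have e₁ := Q_add_length (ℓ := ℓ) (t := t) (by omega) i 0 x
    have e₂ := Q_add_length (ℓ := ℓ) (t := t) (by omega) j (0 + -1) x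
    rw [zero_add] at e₁
    rw [show (0 : ℤ) + -1 + ℓ = ℓ - 1 by ring] at e₂
    rw [bracketCoeff, if_pos rfl, e₁, e₂, halfCothRatio_mul_mul (exp_pos _).ne']

end BracketCoeff

theorem monopole_bracket_Ktheoretic_general
    (N ℓ : ℕ) (hℓ : 3 ≤ ℓ) (t : ℝ)
    (s : ℤ) (hs : s = 1 ∨ s = -1)
    (i j : Fin N) (α β : ℤ) (hα : 0 ≤ α) (hα' : α < ℓ) (hβ : 0 ≤ β) (hβ' : β < ℓ)
    (x : M N) (hx : x ∈ U N ℓ t) :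
    Pb N ℓ (u N ℓ t s i α) (u N ℓ t s j β) x =
      (s : ℝ) * (1 - (if i = j then (1 : ℝ) else 0) * (if α = β then (1 : ℝ) else 0)) *
        kappa ℓ α β * u N ℓ t s i α x * u N ℓ t s j β x *
        (if (α, β) = ((0 : ℤ), (ℓ : ℤ) - 1) then
            (1 / 2) * (Q N ℓ t i ℓ x + Q N ℓ t j ((ℓ : ℤ) - 1) x) /
              (Q N ℓ t i ℓ x - Q N ℓ t j ((ℓ : ℤ) - 1) x)
         else if (α, β) = ((ℓ : ℤ) - 1, (0 : ℤ)) then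
            (1 / 2) * (Q N ℓ t i ((ℓ : ℤ) - 1) x + Q N ℓ t j ℓ x) /
              (Q N ℓ t i ((ℓ : ℤ) - 1) x - Q N ℓ t j ℓ x)
         else (1 / 2) * (Q N ℓ t i α x + Q N ℓ t j β x) /
              (Q N ℓ t i α x - Q N ℓ t j β x)) := by
  change _ = _ * bracketCoeff N ℓ t i j α β x
  by_cases hdiag : i = j ∧ α = β
  · obtain ⟨rfl, rfl⟩ := hdiag
    simp [Pb_self]
  rw [ite_zero_mul_ite_zero, if_neg hdiag, sub_zero, mul_one]
  obtain rfl | hαβ := eq_or_ne α β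
  · have hij : i ≠ j := fun h => hdiag ⟨h, rfl⟩
    rw [Pb_u_u_same_node (by omega) hs hij (hx i j α α hα hα'.le hα hα'.le (by simp [hij])),
      kappa_self (by omega), bracketCoeff_self (by omega)]
    ring
  have h₀ : ¬ α ≡ β [ZMOD ℓ] := by
    rwa [Int.ModEq, Int.emod_eq_of_lt hα hα', Int.emod_eq_of_lt hβ hβ']
  by_cases h₁ : α + s ≡ β [ZMOD ℓ]
  · rw [Pb_u_u_of_add_sign_modEq hℓ hs h₁ (xc_ne_xc_add_sign hx hs hα hα' i j),
      kappa_of_add_sign_modEq hℓ hs h₁, bracketCoeff_of_add_sign_modEq hℓ hs hα hα' hβ hβ' h₁]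
    ring
  by_cases h₂ : β + s ≡ α [ZMOD ℓ]
  · rw [Pb_antisymm, Pb_u_u_of_add_sign_modEq hℓ hs h₂ (xc_ne_xc_add_sign hx hs hβ hβ' j i),
      kappa_comm, kappa_of_add_sign_modEq hℓ hs h₂, bracketCoeff_swap (by omega : ℓ ≠ 1) j i β α,
      bracketCoeff_of_add_sign_modEq hℓ hs hβ hβ' hα hα' h₂]
    ring
  rw [Pb_u_u_of_not_adjacent (by omega) h₀ h₁ h₂, kappa_of_not_adjacent hs h₀ h₁ h₂]
  ring

/-- Poisson brackets of like-sign t-deformed K-theoretic monopole operators. -/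
theorem monopole_bracket_Ktheoretic
    (N ℓ : ℕ) (hN : 1 ≤ N) (hℓ : 3 ≤ ℓ) (t : ℝ) (ht : 0 < t) (ht' : t ≠ 1)
    (s : ℤ) (hs : s = 1 ∨ s = -1)
    (i j : Fin N) (α β : ℤ) (hα : 0 ≤ α) (hα' : α < ℓ) (hβ : 0 ≤ β) (hβ' : β < ℓ)
    (x : M N) (hx : x ∈ U N ℓ t) :
    Pb N ℓ (u N ℓ t s i α) (u N ℓ t s j β) x =
      (s : ℝ) * (1 - (if i = j then (1 : ℝ) else 0) * (if α = β then (1 : ℝ) else 0)) *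
        kappa ℓ α β * u N ℓ t s i α x * u N ℓ t s j β x *
        (if (α, β) = ((0 : ℤ), (ℓ : ℤ) - 1) then
            (1 / 2) * (Q N ℓ t i ℓ x + Q N ℓ t j ((ℓ : ℤ) - 1) x) /
              (Q N ℓ t i ℓ x - Q N ℓ t j ((ℓ : ℤ) - 1) x)
         else if (α, β) = ((ℓ : ℤ) - 1, (0 : ℤ)) then
            (1 / 2) * (Q N ℓ t i ((ℓ : ℤ) - 1) x + Q N ℓ t j ℓ x) /
              (Q N ℓ t i ((ℓ : ℤ) - 1) x - Q N ℓ t j ℓ x)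
         else (1 / 2) * (Q N ℓ t i α x + Q N ℓ t j β x) /
              (Q N ℓ t i α x - Q N ℓ t j β x)) :=
  monopole_bracket_Ktheoretic_general N ℓ hℓ t s hs i j α β hα hα' hβ hβ' x hx

end SpinRSK
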